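/- arXiv:1705.09952 — 2 statements merged into one kernel-verified Lean document; each statement's English description precedes it below -/
import Mathlib

section
/- Let Y ∈ [0,1] be a random variable and X a random vector with values in [0,1]^d. Suppose μ(x) = E[Y|X=x] takes values in [0,1] and is (β,L)-Hölder continuous, and σ²(x) = Var(Y|X=x) is (β,L)-Hölder continuous. Let B ⊆ [0,1]^d have positive probability and diameter V. Define μ̄ = E[Y | X∈B] and σ̄² = Var(Y | X∈B). Then for every x ∈ B, |σ²(x) - σ̄²| ≤ 5L·V^β. -/
open MeasureTheory

/-!
Write `ν` for the law of `X` and `⨍` for averages over `B` with respect to `ν`. By the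
conditioning identities the group mean is `⨍ μ` and the group second moment is
`⨍ (σ² + μ²)`, so the group variance is `⨍ (σ² + μ²) - (⨍ μ)²`, while
`σ²(x) = (σ²(x) + μ(x)²) - μ(x)²`. On `B` the Hölder conditions keep `μ` within `K = L V^β`
of `μ(x)` and, since `|a² - b²| ≤ 2|a - b|` on `[-1, 1]`, keep `σ² + μ²` within `3K` of its
value at `x`. Averages inherit these bounds, and comparing the two squares once more costs `2K`.
-/

theorem isBounded_setOf_forall_mem_Icc {ι : Type*} [Fintype ι] (a b : ℝ) :
    Bornology.IsBounded {x : EuclideanSpace ℝ ι | ∀ i, x i ∈ Set.Icc a b} :=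
  ((EuclideanSpace.equiv ι ℝ).toHomeomorph.isCompact_preimage.2
    (isCompact_univ_pi fun _ => isCompact_Icc)).isBounded.subset fun _ hx i _ => hx i

theorem dist_setAverage_le {α E : Type*} [MeasurableSpace α] [NormedAddCommGroup E]
    [NormedSpace ℝ E] [CompleteSpace E] {ν : Measure α} {s : Set α} (hs : MeasurableSet s)
    (hν₀ : ν s ≠ 0) (hν : ν s ≠ ⊤) {f : α → E} (hf : AEStronglyMeasurable f (ν.restrict s))
    {c : E} {K : ℝ} (hfc : ∀ y ∈ s, dist (f y) c ≤ K) :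
    dist (⨍ y in s, f y ∂ν) c ≤ K := by
  have hfs : ∀ᵐ y ∂ν.restrict s, f y ∈ Metric.closedBall c K := ae_restrict_of_forall_mem hs hfc
  have hfi : IntegrableOn f s ν := by
    refine ⟨hf, .restrict_of_bounded hν.lt_top (hfs.mono fun y hy => ?_) (C := ‖c‖ + K)⟩
    have := norm_le_norm_add_norm_sub' (f y) c
    rw [Metric.mem_closedBall, dist_eq_norm] at hy
    linarith
  exact (convex_closedBall c K).set_average_mem Metric.isClosed_closedBall hν₀ hν hfs hfi

theorem abs_setAverage_sub_le {α : Type*} [MeasurableSpace α] {ν : Measure α} {s : Set α}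
    (hs : MeasurableSet s) (hν₀ : ν s ≠ 0) (hν : ν s ≠ ⊤) {f : α → ℝ}
    (hf : AEStronglyMeasurable f (ν.restrict s)) {c K : ℝ} (hfc : ∀ y ∈ s, |f y - c| ≤ K) :
    |⨍ y in s, f y ∂ν - c| ≤ K :=
  dist_setAverage_le hs hν₀ hν hf fun y hy => (Real.dist_eq _ _).trans_le (hfc y hy)

theorem abs_sub_le_mul_diam_rpow {E : Type*} [SeminormedAddCommGroup E] {f : E → ℝ}
    {S B : Set E} {L β : ℝ} (hL : 0 ≤ L) (hβ : 0 ≤ β)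
    (hf : ∀ y z, y ∈ S → z ∈ S → |f y - f z| ≤ L * ‖y - z‖ ^ β)
    (hB : Bornology.IsBounded B) (hBS : B ⊆ S) {y z : E} (hy : y ∈ B) (hz : z ∈ B) :
    |f y - f z| ≤ L * Metric.diam B ^ β := by
  refine (hf y z (hBS hy) (hBS hz)).trans ?_
  gcongr
  rw [← dist_eq_norm]
  exact Metric.dist_le_diam_of_mem hB hy hz

theorem abs_sq_sub_sq_le {a b : ℝ} (ha : |a| ≤ 1) (hb : |b| ≤ 1) :
    |a ^ 2 - b ^ 2| ≤ 2 * |a - b| := by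
  rw [sq_sub_sq, abs_mul]
  exact mul_le_mul_of_nonneg_right ((abs_add_le a b).trans (by linarith)) (abs_nonneg _)

theorem conditional_variance_approximation_general {d : ℕ} {Ω : Type*} [MeasurableSpace Ω]
    (P : Measure Ω) [IsProbabilityMeasure P]
    (X : Ω → EuclideanSpace ℝ (Fin d)) (Y : Ω → ℝ)
    (β L : ℝ) (hβ : β ∈ Set.Ioc (0:ℝ) 1) (hL : 0 < L)
    (μ σ2 : EuclideanSpace ℝ (Fin d) → ℝ) (hμm : Measurable μ) (hσm : Measurable σ2)
    (hμ01 : ∀ x : EuclideanSpace ℝ (Fin d), (∀ i, x i ∈ Set.Icc (0:ℝ) 1) →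
      μ x ∈ Set.Icc (0:ℝ) 1)
    (hμH : ∀ x y : EuclideanSpace ℝ (Fin d), (∀ i, x i ∈ Set.Icc (0:ℝ) 1) →
      (∀ i, y i ∈ Set.Icc (0:ℝ) 1) → |μ x - μ y| ≤ L * ‖x - y‖ ^ β)
    (hσH : ∀ x y : EuclideanSpace ℝ (Fin d), (∀ i, x i ∈ Set.Icc (0:ℝ) 1) →
      (∀ i, y i ∈ Set.Icc (0:ℝ) 1) → |σ2 x - σ2 y| ≤ L * ‖x - y‖ ^ β)
    (B : Set (EuclideanSpace ℝ (Fin d))) (hBm : MeasurableSet B)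
    (hBsub : B ⊆ {x | ∀ i, x i ∈ Set.Icc (0:ℝ) 1})
    (hBpos : 0 < Measure.map X P B)
    -- `μ` is the conditional mean of `Y` given `X`, and `σ² + μ²` is the conditional
    -- second moment of `Y` given `X` (expressed on the group `B`):
    (hcond1 : ∫ ω in X ⁻¹' B, Y ω ∂P = ∫ x in B, μ x ∂(Measure.map X P))
    (hcond2 : ∫ ω in X ⁻¹' B, (Y ω) ^ 2 ∂P
      = ∫ x in B, (σ2 x + (μ x) ^ 2) ∂(Measure.map X P)) :
    ∀ x ∈ B,
      |σ2 x -
        (((Measure.map X P) B).toReal⁻¹ * ∫ ω in X ⁻¹' B, (Y ω) ^ 2 ∂P -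
          (((Measure.map X P) B).toReal⁻¹ * ∫ ω in X ⁻¹' B, Y ω ∂P) ^ 2)|
        ≤ 5 * L * Metric.diam B ^ β := by
  intro x hx
  set ν := Measure.map X P
  set K := L * Metric.diam B ^ β
  have hB := (isBounded_setOf_forall_mem_Icc 0 1).subset hBsub
  have hνB : ν B ≠ 0 := hBpos.ne'
  have hμ1 : ∀ y ∈ B, |μ y| ≤ 1 := fun y hy =>
    abs_le.2 ⟨by linarith [(hμ01 y (hBsub hy)).1], (hμ01 y (hBsub hy)).2⟩
  have hmean : |⨍ y in B, μ y ∂ν - μ x| ≤ K :=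
    abs_setAverage_sub_le hBm hνB (measure_ne_top ν B) hμm.aestronglyMeasurable
      fun y hy => abs_sub_le_mul_diam_rpow hL.le hβ.1.le hμH hB hBsub hy hx
  have hmean1 : |⨍ y in B, μ y ∂ν| ≤ 1 := by
    simpa only [sub_zero] using abs_setAverage_sub_le hBm hνB (measure_ne_top ν B)
      hμm.aestronglyMeasurable (c := 0) fun y hy => by simpa only [sub_zero] using hμ1 y hy
  have hmoment : |⨍ y in B, (σ2 y + μ y ^ 2) ∂ν - (σ2 x + μ x ^ 2)| ≤ 3 * K := by
    refine abs_setAverage_sub_le hBm hνB (measure_ne_top ν B)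
      (hσm.add (hμm.pow_const 2)).aestronglyMeasurable fun y hy => ?_
    calc |σ2 y + μ y ^ 2 - (σ2 x + μ x ^ 2)|
        ≤ |σ2 y - σ2 x| + |μ y ^ 2 - μ x ^ 2| := by
          rw [add_sub_add_comm]; exact abs_add_le _ _
      _ ≤ K + 2 * K := add_le_add (abs_sub_le_mul_diam_rpow hL.le hβ.1.le hσH hB hBsub hy hx)
          ((abs_sq_sub_sq_le (hμ1 y hy) (hμ1 x hx)).trans
            (by linarith [abs_sub_le_mul_diam_rpow hL.le hβ.1.le hμH hB hBsub hy hx]))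
      _ = 3 * K := by ring
  rw [hcond1, hcond2, ← measureReal_def, ← smul_eq_mul, ← smul_eq_mul, ← setAverage_eq,
    ← setAverage_eq]
  calc |σ2 x - (⨍ y in B, (σ2 y + μ y ^ 2) ∂ν - (⨍ y in B, μ y ∂ν) ^ 2)|
      = |(⨍ y in B, (σ2 y + μ y ^ 2) ∂ν - (σ2 x + μ x ^ 2))
          - ((⨍ y in B, μ y ∂ν) ^ 2 - μ x ^ 2)| := by rw [abs_sub_comm]; congr 1; ring
    _ ≤ 3 * K + 2 * K := (abs_sub _ _).trans
          (add_le_add hmoment ((abs_sq_sub_sq_le hmean1 (hμ1 x hx)).trans (by linarith)))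
    _ = 5 * L * Metric.diam B ^ β := by ring

/-- if the conditional mean `μ` and conditional variance `σ²` of a
`[0,1]`-valued outcome `Y` given covariates `X ∈ [0,1]^d` are (β,L)-Hölder, then the
conditional variance at any `x` in a group `B` of diameter `V` differs from the
group variance `Var(Y | X ∈ B)` by at most `5 L V ^ β`. -/
theorem conditional_variance_approximation {d : ℕ} {Ω : Type*} [MeasurableSpace Ω]
    (P : Measure Ω) [IsProbabilityMeasure P]
    (X : Ω → EuclideanSpace ℝ (Fin d)) (Y : Ω → ℝ)
    (hX : Measurable X) (hY : Measurable Y)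
    (hXc : ∀ ω, ∀ i, X ω i ∈ Set.Icc (0:ℝ) 1)
    (hY01 : ∀ ω, Y ω ∈ Set.Icc (0:ℝ) 1)
    (β L : ℝ) (hβ : β ∈ Set.Ioc (0:ℝ) 1) (hL : 0 < L)
    (μ σ2 : EuclideanSpace ℝ (Fin d) → ℝ) (hμm : Measurable μ) (hσm : Measurable σ2)
    (hμ01 : ∀ x : EuclideanSpace ℝ (Fin d), (∀ i, x i ∈ Set.Icc (0:ℝ) 1) →
      μ x ∈ Set.Icc (0:ℝ) 1)
    (hσ01 : ∀ x : EuclideanSpace ℝ (Fin d), (∀ i, x i ∈ Set.Icc (0:ℝ) 1) →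
      σ2 x ∈ Set.Icc (0:ℝ) 1)
    (hμH : ∀ x y : EuclideanSpace ℝ (Fin d), (∀ i, x i ∈ Set.Icc (0:ℝ) 1) →
      (∀ i, y i ∈ Set.Icc (0:ℝ) 1) → |μ x - μ y| ≤ L * ‖x - y‖ ^ β)
    (hσH : ∀ x y : EuclideanSpace ℝ (Fin d), (∀ i, x i ∈ Set.Icc (0:ℝ) 1) →
      (∀ i, y i ∈ Set.Icc (0:ℝ) 1) → |σ2 x - σ2 y| ≤ L * ‖x - y‖ ^ β)
    (B : Set (EuclideanSpace ℝ (Fin d))) (hBm : MeasurableSet B)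
    (hBsub : B ⊆ {x | ∀ i, x i ∈ Set.Icc (0:ℝ) 1})
    (hBpos : 0 < Measure.map X P B)
    -- `μ` is the conditional mean of `Y` given `X`, and `σ² + μ²` is the conditional
    -- second moment of `Y` given `X` (expressed on the group `B`):
    (hcond1 : ∫ ω in X ⁻¹' B, Y ω ∂P = ∫ x in B, μ x ∂(Measure.map X P))
    (hcond2 : ∫ ω in X ⁻¹' B, (Y ω) ^ 2 ∂P
      = ∫ x in B, (σ2 x + (μ x) ^ 2) ∂(Measure.map X P)) :
    ∀ x ∈ B,
      |σ2 x -
        (((Measure.map X P) B).toReal⁻¹ * ∫ ω in X ⁻¹' B, (Y ω) ^ 2 ∂P -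
          (((Measure.map X P) B).toReal⁻¹ * ∫ ω in X ⁻¹' B, Y ω ∂P) ^ 2)|
        ≤ 5 * L * Metric.diam B ^ β :=
  conditional_variance_approximation_general P X Y β L hβ hL μ σ2 hμm hσm hμ01 hμH hσH B hBm hBsub
    hBpos hcond1 hcond2
end

section
/- Suppose nonnegative random variables R and S satisfy: S ≤ c·n almost surely for some c > 0 and n ≥ 1, and for every δ ∈ (0, δ₀]: E[R] ≥ δ·(E[S] − C₀·n·δ^α), where α > 0, C₀ > 0, and (E[S]/(2C₀ n))^{1/α} ≤ δ₀. Then E[S] ≤ C₁·n^{1/(1+α)}·E[R]^{α/(1+α)} for a constant C₁ depending only on α and C₀. -/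
open MeasureTheory

/-- abstract margin-condition argument. If `S ≤ c·n` a.s. and
`E[R] ≥ δ (E[S] - C₀ n δ^α)` for all `δ ∈ (0, δ₀]`, where the optimal choice
`(E[S]/(2C₀n))^{1/α}` lies below `δ₀`, then
`E[S] ≤ C₁ · n^{1/(1+α)} · E[R]^{α/(1+α)}` with `C₁ = C₁(α, C₀)`. -/
theorem suboptimal_count_from_regret (α C₀ : ℝ) (hα : 0 < α) (hC₀ : 0 < C₀) :
    ∃ C₁ : ℝ, 0 < C₁ ∧
      ∀ {Ω : Type} [MeasurableSpace Ω] (P : Measure Ω) [IsProbabilityMeasure P]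
        (R S : Ω → ℝ) (_ : Measurable R) (_ : Measurable S)
        (_ : ∀ ω, 0 ≤ R ω) (_ : ∀ ω, 0 ≤ S ω)
        (c n δ₀ : ℝ) (_ : 0 < c) (_ : 1 ≤ n) (_ : 0 < δ₀)
        (_ : ∀ᵐ ω ∂P, S ω ≤ c * n)
        (_ : ∀ δ : ℝ, 0 < δ → δ ≤ δ₀ →
          δ * ((∫ ω, S ω ∂P) - C₀ * n * δ ^ α) ≤ ∫ ω, R ω ∂P)
        (_ : ((∫ ω, S ω ∂P) / (2 * C₀ * n)) ^ (1/α) ≤ δ₀),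
        (∫ ω, S ω ∂P) ≤ C₁ * n ^ (1 / (1 + α)) * (∫ ω, R ω ∂P) ^ (α / (1 + α)) := by
  refine ⟨2 * max 1 (2 * C₀), by positivity, ?_⟩
  intro Ω _ P _ R S _ _ hR0 hS0 c n δ₀ hc hn hδ₀ hSb hkey hopt
  set ES := ∫ ω, S ω ∂P with hESdef
  set ER := ∫ ω, R ω ∂P with hERdef
  have hn0 : (0:ℝ) < n := lt_of_lt_of_le one_pos hn
  have hES0 : 0 ≤ ES := integral_nonneg hS0
  have hER0 : 0 ≤ ER := integral_nonneg hR0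
  have h1α : (0:ℝ) < 1 + α := by linarith
  have he1 : α / (1 + α) ≤ 1 := by rw [div_le_one h1α]; linarith
  have he1' : 0 ≤ α / (1 + α) := by positivity
  have hRHS0 : 0 ≤ 2 * max 1 (2 * C₀) * n ^ (1 / (1 + α)) * ER ^ (α / (1 + α)) := by
    positivity
  rcases eq_or_lt_of_le hES0 with h0 | hESpos
  · exact h0 ▸ hRHS0
  set K := 2 * C₀ * n with hK
  have hKpos : 0 < K := by positivity
  have hbasepos : 0 < ES / K := div_pos hESpos hKpos
  set δ := (ES / K) ^ (1/α) with hδ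
  have hδpos : 0 < δ := Real.rpow_pos_of_pos hbasepos _
  have hδα : δ ^ α = ES / K := by
    rw [hδ, ← Real.rpow_mul hbasepos.le, one_div, inv_mul_cancel₀ hα.ne', Real.rpow_one]
  have hmain := hkey δ hδpos hopt
  have h2 : δ * (ES / 2) ≤ ER := by
    have heq : C₀ * n * (ES / K) = ES / 2 := by
      rw [hK]; field_simp
    calc δ * (ES / 2) = δ * (ES - C₀ * n * δ ^ α) := by rw [hδα, heq]; ring
      _ ≤ ER := hmain
  have hK1 : 0 < K ^ (1/α) := Real.rpow_pos_of_pos hKpos _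
  have h3 : ES ^ ((1 + α)/α) ≤ 2 * K ^ (1/α) * ER := by
    have hpow : ES ^ ((1 + α)/α) = ES ^ (1/α) * ES := by
      have : (1 + α)/α = 1/α + 1 := by field_simp
      rw [this, Real.rpow_add hESpos, Real.rpow_one]
    rw [hpow]
    have h2' : ES ^ (1/α) / K ^ (1/α) * (ES / 2) ≤ ER := by
      rwa [← Real.div_rpow hESpos.le hKpos.le]
    rw [div_mul_eq_mul_div, div_le_iff₀ hK1] at h2'
    nlinarith
  have h4 := Real.rpow_le_rpow (by positivity) h3 he1'
  rw [← Real.rpow_mul hESpos.le] at h4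
  have hexp : (1 + α)/α * (α / (1 + α)) = 1 := by field_simp
  rw [hexp, Real.rpow_one] at h4
  have hrhs : (2 * K ^ (1/α) * ER) ^ (α / (1 + α))
      = 2 ^ (α / (1 + α)) * K ^ (1/(1 + α)) * ER ^ (α / (1 + α)) := by
    rw [Real.mul_rpow (by positivity) hER0, Real.mul_rpow (by norm_num) hK1.le,
      ← Real.rpow_mul hKpos.le]
    congr 2
    field_simp
  rw [hrhs] at h4
  have hKsplit : K ^ (1/(1 + α)) = (2 * C₀) ^ (1/(1 + α)) * n ^ (1/(1 + α)) := by
    rw [hK, Real.mul_rpow (by positivity) hn0.le]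
  have h2le : (2:ℝ) ^ (α / (1 + α)) ≤ 2 := by
    calc (2:ℝ) ^ (α / (1 + α)) ≤ 2 ^ (1:ℝ) :=
          Real.rpow_le_rpow_of_exponent_le (by norm_num) he1
      _ = 2 := Real.rpow_one 2
  have hCle : (2 * C₀) ^ (1/(1 + α)) ≤ max 1 (2 * C₀) := by
    rcases le_total (2 * C₀) 1 with h | h
    · exact le_trans (Real.rpow_le_one (by positivity) h (by positivity)) (le_max_left _ _)
    · calc (2 * C₀) ^ (1/(1 + α)) ≤ (2 * C₀) ^ (1:ℝ) :=
            Real.rpow_le_rpow_of_exponent_le h (by rw [div_le_one h1α]; linarith)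
        _ = 2 * C₀ := Real.rpow_one _
        _ ≤ max 1 (2 * C₀) := le_max_right _ _
  calc ES ≤ 2 ^ (α / (1 + α)) * ((2 * C₀) ^ (1/(1 + α)) * n ^ (1/(1 + α)))
            * ER ^ (α / (1 + α)) := by rw [← hKsplit]; exact h4
    _ ≤ 2 * (max 1 (2 * C₀) * n ^ (1/(1 + α))) * ER ^ (α / (1 + α)) := by
        gcongr
    _ = 2 * max 1 (2 * C₀) * n ^ (1 / (1 + α)) * ER ^ (α / (1 + α)) := by ring
end
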